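/- Let M be an R-module that is Σ-D2, i.e., for every index set Λ the direct sum M^(Λ) satisfies the D2-condition. If M is a Σ-dual Rickart module, then M is a Σ-Rickart module. -/

import Mathlib

universe u v

/-- A module `M` is dual-Rickart if the image of every endomorphism is a direct summand. -/
def IsDualRickart (R : Type u) [Ring R] (M : Type v) [AddCommGroup M] [Module R M] : Prop :=
  ∀ φ : M →ₗ[R] M, ∃ q : Submodule R M, IsCompl (LinearMap.range φ) q

/-- A module `M` is Σ-dual Rickart if every direct sum of copies of `M` is dual-Rickart. -/
def IsSigmaDualRickart (R : Type u) [Ring R] (M : Type v) [AddCommGroup M] [Module R M] :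
    Prop :=
  ∀ Λ : Type v, IsDualRickart R (Λ →₀ M)

/-- A module `M` is Rickart if the kernel of every endomorphism is a direct summand. -/
def IsRickart (R : Type u) [Ring R] (M : Type v) [AddCommGroup M] [Module R M] : Prop :=
  ∀ φ : M →ₗ[R] M, ∃ q : Submodule R M, IsCompl (LinearMap.ker φ) q

/-- A module `M` is Σ-Rickart if every direct sum of copies of `M` is Rickart. -/
def IsSigmaRickart (R : Type u) [Ring R] (M : Type v) [AddCommGroup M] [Module R M] : Prop :=
  ∀ Λ : Type v, IsRickart R (Λ →₀ M)

/-- `M` satisfies the D2-condition: if `M/N` is isomorphic to a direct summand of `M`,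
then `N` is a direct summand of `M`. -/
def D2Cond (R : Type u) [Ring R] (M : Type v) [AddCommGroup M] [Module R M] : Prop :=
  ∀ N : Submodule R M,
    (∃ K K' : Submodule R M, IsCompl K K' ∧ Nonempty ((M ⧸ N) ≃ₗ[R] K)) →
      ∃ N', IsCompl N N'

theorem isRickart_of_d2Cond_of_isDualRickart {R : Type u} [Ring R] {M : Type v}
    [AddCommGroup M] [Module R M] (hD2 : D2Cond R M) (hM : IsDualRickart R M) :
    IsRickart R M := fun φ ↦ by
  obtain ⟨q, hq⟩ := hM φ
  exact hD2 (LinearMap.ker φ) ⟨LinearMap.range φ, q, hq, ⟨φ.quotKerEquivRange⟩⟩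

/-- A Σ-D2, Σ-dual Rickart module is Σ-Rickart. -/
theorem stmt13 (R : Type u) [Ring R] (M : Type v) [AddCommGroup M] [Module R M]
    (hD2 : ∀ Λ : Type v, D2Cond R (Λ →₀ M)) (hM : IsSigmaDualRickart R M) :
    IsSigmaRickart R M :=
  fun Λ ↦ isRickart_of_d2Cond_of_isDualRickart (hD2 Λ) (hM Λ)
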